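/- Let P be a nonconstant polynomial with complex coefficients. Then every complex root of the derivative P' lies in the convex hull (taken in ℂ, regarded as a real vector space) of the set of complex roots of P. -/

import Mathlib

open Polynomial

/-- **Gauss–Lucas theorem.** Every complex root of the derivative of a nonconstant
complex polynomial `P` lies in the convex hull (in `ℂ` viewed as a real vector space)
of the set of complex roots of `P`. -/
theorem gauss_lucas (P : Polynomial ℂ) (hP : 1 ≤ P.natDegree)
    (z : ℂ) (hz : P.derivative.IsRoot z) :
    z ∈ convexHull ℝ {w : ℂ | P.IsRoot w} := by
  have hdeg : 0 < P.degree := natDegree_pos_iff_degree_pos.mp hP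
  have hP' : P.derivative ≠ 0 := mt derivative_eq_zero.mp (by omega)
  have hroots : P.rootSet ℂ = {w : ℂ | P.IsRoot w} := by
    ext w
    simp [mem_rootSet, ne_zero_of_degree_gt hdeg]
  rw [← hroots]
  exact rootSet_derivative_subset_convexHull_rootSet hdeg <| by
    simpa [mem_rootSet, hP'] using hz
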